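/- arXiv:2206.10698 — 2 statements merged into one kernel-verified Lean document; each statement's English description precedes it below -/
import Mathlib

section
/- For a real matrix Z of size d×n with unit-norm columns, the squared Frobenius norm of C = Z Zᵀ satisfies ‖C‖_F² ≥ n²/d, with equality if and only if C = (n/d)·I (the scaled identity matrix), assuming d ≤ n. -/
open Matrix

/-!
Writing `c = tr C / d`, the squared Frobenius norm splits as
`‖C‖_F² = (tr C)² / d + ‖C - c • 1‖_F²`. Unit columns give `tr (Z Zᵀ) = n`, so
`‖C‖_F² ≥ n² / d`, with equality exactly when `C = (n / d) • 1`.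
-/

namespace Matrix

variable {m n ι R : Type*} [Fintype m] [Fintype n] [Fintype ι]

theorem sum_sq_entries_eq_trace_mul_transpose [CommSemiring R] (A : Matrix m n R) :
    ∑ i, ∑ j, A i j ^ 2 = trace (A * Aᵀ) := by
  simp only [trace, diag, mul_apply, transpose_apply, sq]

theorem sum_sq_entries_eq_zero_iff [Ring R] [LinearOrder R] [IsStrictOrderedRing R]
    {A : Matrix m n R} : ∑ i, ∑ j, A i j ^ 2 = 0 ↔ A = 0 := by
  rw [← Matrix.ext_iff]
  simp [Finset.sum_eq_zero_iff_of_nonneg, Finset.sum_nonneg, sq_nonneg]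

theorem sum_sq_entries_sub_smul_one [DecidableEq ι] [CommRing R] (M : Matrix ι ι R) (c : R) :
    ∑ i, ∑ j, (M - c • 1) i j ^ 2 =
      ∑ i, ∑ j, M i j ^ 2 - 2 * c * trace M + c ^ 2 * Fintype.card ι := by
  simp only [sum_sq_entries_eq_trace_mul_transpose, transpose_sub, transpose_smul,
    transpose_one, sub_mul, mul_sub, smul_mul, Matrix.mul_smul, mul_one, one_mul, trace_sub,
    trace_smul, trace_transpose, trace_one, smul_eq_mul]
  ring

theorem sum_sq_entries_eq_sq_trace_div_card_add [DecidableEq ι] {K : Type*} [Field K]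
    (M : Matrix ι ι K) :
    ∑ i, ∑ j, M i j ^ 2 =
      trace M ^ 2 / Fintype.card ι + ∑ i, ∑ j, (M - (trace M / Fintype.card ι) • 1) i j ^ 2 := by
  rw [sum_sq_entries_sub_smul_one]
  rcases eq_or_ne (Fintype.card ι : K) 0 with hk | hk
  · simp [hk]
  · field_simp
    ring

end Matrix

theorem frobenius_cov_lower_bound_general (d n : ℕ)
    (Z : Matrix (Fin d) (Fin n) ℝ) (hcol : ∀ j, ∑ i, (Z i j)^2 = 1) :
    (n:ℝ)^2 / d ≤ ∑ i, ∑ j, ((Z * Zᵀ) i j)^2 ∧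
    (∑ i, ∑ j, ((Z * Zᵀ) i j)^2 = (n:ℝ)^2 / d ↔
      Z * Zᵀ = ((n:ℝ)/d) • (1 : Matrix (Fin d) (Fin d) ℝ)) := by
  have htrace : trace (Z * Zᵀ) = n := by
    rw [← trace_transpose_mul, ← sum_sq_entries_eq_trace_mul_transpose]
    simp only [transpose_apply, hcol, Finset.sum_const, Finset.card_univ, Fintype.card_fin,
      nsmul_eq_mul, mul_one]
  have hsplit := sum_sq_entries_eq_sq_trace_div_card_add (Z * Zᵀ)
  rw [htrace, Fintype.card_fin] at hsplit
  refine ⟨hsplit ▸ le_add_of_nonneg_right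
    (Fintype.sum_nonneg fun _ => Fintype.sum_nonneg fun _ => sq_nonneg _), ?_⟩
  rw [hsplit, add_eq_left, sum_sq_entries_eq_zero_iff, sub_eq_zero]

theorem frobenius_cov_lower_bound (d n : ℕ) (hdn : d ≤ n)
    (Z : Matrix (Fin d) (Fin n) ℝ) (hcol : ∀ j, ∑ i, (Z i j)^2 = 1) :
    (n:ℝ)^2 / d ≤ ∑ i, ∑ j, ((Z * Zᵀ) i j)^2 ∧
    (∑ i, ∑ j, ((Z * Zᵀ) i j)^2 = (n:ℝ)^2 / d ↔
      Z * Zᵀ = ((n:ℝ)/d) • (1 : Matrix (Fin d) (Fin d) ℝ)) :=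
  frobenius_cov_lower_bound_general d n Z hcol
end

section
/- For a real matrix Z of size d×n with d ≤ n and unit-norm columns, ‖Z Zᵀ‖_F² = n²/d holds if and only if all eigenvalues of Z Zᵀ equal n/d. -/
/-!
The trace of `Z Zᵀ` is the sum of the squared column norms, namely `n`, and its squared
Frobenius norm is the trace of its square, i.e. the sum of the squared eigenvalues. For `d`
reals `λᵢ` with sum `n`, the identity `∑ (λᵢ - n/d)² = ∑ λᵢ² - n²/d` shows that
`∑ λᵢ² = n²/d` exactly when every `λᵢ` equals the mean `n/d`.
-/

open Matrix Finset

theorem sum_sub_mean_sq {ι : Type*} [Fintype ι] (f : ι → ℝ) :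
    ∑ i, (f i - (∑ j, f j) / Fintype.card ι) ^ 2 =
      ∑ i, f i ^ 2 - (∑ i, f i) ^ 2 / Fintype.card ι := by
  rcases isEmpty_or_nonempty ι with hι | hι
  · simp
  have hcard : (Fintype.card ι : ℝ) ≠ 0 := by positivity
  simp only [sub_sq, sum_add_distrib, sum_sub_distrib, ← sum_mul, ← mul_sum, sum_const,
    card_univ, nsmul_eq_mul]
  field_simp
  ring

theorem sum_sq_eq_sq_sum_div_card_iff {ι : Type*} [Fintype ι] (f : ι → ℝ) :
    ∑ i, f i ^ 2 = (∑ i, f i) ^ 2 / Fintype.card ι ↔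
      ∀ i, f i = (∑ j, f j) / Fintype.card ι := by
  rw [← sub_eq_zero, ← sum_sub_mean_sq,
    Fintype.sum_eq_zero_iff_of_nonneg (fun i => sq_nonneg _)]
  simp only [funext_iff, Pi.zero_apply, pow_eq_zero_iff two_ne_zero, sub_eq_zero]

namespace Matrix

variable {m n : Type*} [Fintype m] [Fintype n]

theorem trace_mul_transpose_self {R : Type*} [Semiring R] (A : Matrix m n R) :
    (A * Aᵀ).trace = ∑ i, ∑ j, A i j ^ 2 := by
  simp only [trace, diag, mul_apply, transpose_apply, sq]

theorem IsHermitian.trace_mul_self_eq_sum_eigenvalues_sq {𝕜 : Type*} [RCLike 𝕜]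
    [DecidableEq n] {A : Matrix n n 𝕜} (hA : A.IsHermitian) :
    (A * A).trace = ∑ i, (hA.eigenvalues i : 𝕜) ^ 2 := by
  conv_lhs => rw [hA.spectral_theorem, ← map_mul, Unitary.conjStarAlgAut_apply, trace_mul_cycle,
    Unitary.coe_star_mul_self, one_mul, diagonal_mul_diagonal, trace_diagonal]
  simp [sq]

theorem IsHermitian.sum_sq_eq_sum_eigenvalues_sq [DecidableEq n] {A : Matrix n n ℝ}
    (hA : A.IsHermitian) : ∑ i, ∑ j, A i j ^ 2 = ∑ i, hA.eigenvalues i ^ 2 := by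
  have hT : Aᵀ = A := by rw [← conjTranspose_eq_transpose_of_trivial]; exact hA.eq
  rw [← trace_mul_transpose_self, hT]
  simpa using hA.trace_mul_self_eq_sum_eigenvalues_sq

end Matrix

theorem frobenius_eq_iff_eigenvalues_eq_general (d n : ℕ)
    (Z : Matrix (Fin d) (Fin n) ℝ) (hcol : ∀ j, ∑ i, (Z i j)^2 = 1)
    (hH : (Z * Zᵀ).IsHermitian) :
    ∑ i, ∑ j, ((Z * Zᵀ) i j)^2 = (n:ℝ)^2 / d ↔
      ∀ i, hH.eigenvalues i = (n:ℝ) / d := by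
  have htrace : ∑ i, hH.eigenvalues i = n := by
    have h := hH.trace_eq_sum_eigenvalues
    rw [trace_mul_transpose_self, sum_comm] at h
    simpa [hcol] using h.symm
  rw [hH.sum_sq_eq_sum_eigenvalues_sq]
  simpa [htrace] using sum_sq_eq_sq_sum_div_card_iff hH.eigenvalues

theorem frobenius_eq_iff_eigenvalues_eq (d n : ℕ) (hdn : d ≤ n)
    (Z : Matrix (Fin d) (Fin n) ℝ) (hcol : ∀ j, ∑ i, (Z i j)^2 = 1)
    (hH : (Z * Zᵀ).IsHermitian) :
    ∑ i, ∑ j, ((Z * Zᵀ) i j)^2 = (n:ℝ)^2 / d ↔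
      ∀ i, hH.eigenvalues i = (n:ℝ) / d :=
  frobenius_eq_iff_eigenvalues_eq_general d n Z hcol hH
end
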